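/- Let v ∈ S_n avoid the pattern 2143. Then Γ([v,w₀]) contains no 3×3 square region if and only if v avoids the patterns 123, 1432, and 3214. -/

import Mathlib

open Equiv Finset
open scoped Classical

/-- Bruhat order on the symmetric group on `Fin n`, via the rank-matrix
characterization: `v ≤ w` iff every northeast corner count of `v` is at most
that of `w`. -/
def bruhatLE {n : ℕ} (v w : Equiv.Perm (Fin n)) : Prop :=
  ∀ i j : Fin n,
    (Finset.univ.filter fun k => k ≤ i ∧ j ≤ v k).card ≤
      (Finset.univ.filter fun k => k ≤ i ∧ j ≤ w k).card

/-- Coxeter length = number of inversions. -/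
def len {n : ℕ} (v : Equiv.Perm (Fin n)) : ℕ :=
  (Finset.univ.filter fun p : Fin n × Fin n => p.1 < p.2 ∧ v p.2 < v p.1).card

/-- The graph of the Bruhat interval `[v, w]`. -/
def grInt {n : ℕ} (v w : Equiv.Perm (Fin n)) : Set (Fin n × Fin n) :=
  {p | ∃ u : Equiv.Perm (Fin n), bruhatLE v u ∧ bruhatLE u w ∧ u p.1 = p.2}

/-- `Q` contains an `m × m` square region. -/
def hasSquare {n : ℕ} (Q : Set (Fin n × Fin n)) (m : ℕ) : Prop :=
  ∃ r c : ℕ, r + m ≤ n ∧ c + m ≤ n ∧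
    ∀ i j : Fin n, r ≤ (i : ℕ) → (i : ℕ) < r + m → c ≤ (j : ℕ) → (j : ℕ) < c + m →
      (i, j) ∈ Q

def avoids2143 {n : ℕ} (v : Equiv.Perm (Fin n)) : Prop :=
  ¬ ∃ a b c d : Fin n, a < b ∧ b < c ∧ c < d ∧ v b < v a ∧ v a < v d ∧ v d < v c

def avoids123 {n : ℕ} (v : Equiv.Perm (Fin n)) : Prop :=
  ¬ ∃ a b c : Fin n, a < b ∧ b < c ∧ v a < v b ∧ v b < v c

def avoids1432 {n : ℕ} (v : Equiv.Perm (Fin n)) : Prop :=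
  ¬ ∃ a b c d : Fin n, a < b ∧ b < c ∧ c < d ∧ v a < v d ∧ v d < v c ∧ v c < v b

def avoids3214 {n : ℕ} (v : Equiv.Perm (Fin n)) : Prop :=
  ¬ ∃ a b c d : Fin n, a < b ∧ b < c ∧ c < d ∧ v c < v b ∧ v b < v a ∧ v a < v d

/-!
A point `(i, j)` lies in `Γ([v, w₀])` iff some `k ≤ i` has `v k ≤ j` and some `l ≥ i` has
`j ≤ v l`: necessity is read off the rank conditions of `v ≤ u`, and sufficiency comes from
going up in Bruhat order by at most two transpositions across non-inversions. Hence `Γ([v, w₀])`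
contains a `3 × 3` square iff `v` has a non-inversion `⟨k, l⟩` with `l - k ≥ 2` and
`v l - v k ≥ 2`. Each of the patterns 123, 1432, 3214 contains such a pair. Conversely, given
such a pair, comparing `v (k + 1)` and the position of the value `v k + 1` with the pair always
produces one of 123, 1432, 3214 or 2143.
-/

section

variable {n : ℕ}

theorem bruhatLE_refl (v : Perm (Fin n)) : bruhatLE v v := fun _ _ => le_rfl

theorem bruhatLE.trans {u v w : Perm (Fin n)} (huv : bruhatLE u v) (hvw : bruhatLE v w) :
    bruhatLE u w := fun i j => (huv i j).trans (hvw i j)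

theorem card_filter_le_apply (v : Perm (Fin n)) (j : Fin n) : #{k | j ≤ v k} = n - j := by
  rw [← card_map v.toEmbedding, map_filter]
  simp [filter_le_eq_Ici]

theorem bruhatLE_revPerm (u : Perm (Fin n)) : bruhatLE u Fin.revPerm := by
  intro i j
  have hrev : #{k | k ≤ i ∧ j ≤ Fin.revPerm k} = min ((i : ℕ) + 1) (n - j) := by
    have : ({k | k ≤ i ∧ j ≤ Fin.revPerm k} : Finset (Fin n)) = Iic (min i j.rev) := by
      ext k
      simp [Fin.le_rev_iff]
    rw [this, Fin.card_Iic, Fin.coe_min, Fin.val_rev]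
    omega
  have hrow : #{k | k ≤ i ∧ j ≤ u k} ≤ #(Iic i) :=
    card_le_card fun k hk => by simp_all
  have hcol : #{k | k ≤ i ∧ j ≤ u k} ≤ #{k | j ≤ u k} :=
    card_le_card fun k hk => by simp_all
  rw [Fin.card_Iic] at hrow
  rw [card_filter_le_apply] at hcol
  omega

theorem bruhatLE_mul_swap (v : Perm (Fin n)) {k l : Fin n} (hkl : k < l) (hv : v k < v l) :
    bruhatLE v (v * swap k l) := by
  intro i j
  by_cases hli : l ≤ i
  · refine card_le_card_of_injOn (swap k l) (fun m hm => ?_) (swap k l).injective.injOn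
    rw [mem_coe, mem_filter] at hm ⊢
    rw [Perm.mul_apply, swap_apply_self]
    refine ⟨mem_univ _, ?_, hm.2.2⟩
    rw [swap_apply_def]
    split_ifs <;> omega
  · refine card_le_card fun m hm => ?_
    rw [mem_filter] at hm ⊢
    refine ⟨mem_univ _, hm.2.1, ?_⟩
    rw [Perm.mul_apply, swap_apply_def]
    split_ifs with hmk hml
    · exact (hmk ▸ hm.2.2).trans hv.le
    · omega
    · exact hm.2.2

theorem bruhatLE.exists_le_apply_le {v u : Perm (Fin n)} (h : bruhatLE v u) (i : Fin n) :
    ∃ k ≤ i, v k ≤ u i := by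
  by_contra! hlt
  have hj : (u i : ℕ) + 1 < n := by have := hlt i le_rfl; omega
  -- in row `i` and column `u i + 1`, all of the first `i + 1` positions count for `v`, but `i`
  -- itself does not count for `u`
  let j : Fin n := ⟨u i + 1, hj⟩
  have hv : #{k | k ≤ i ∧ j ≤ v k} = #(Iic i) := by
    congr 1
    ext k
    simp only [mem_filter, mem_univ, true_and, mem_Iic, and_iff_left_iff_imp]
    intro hk
    have := hlt k hk
    simp only [j, Fin.le_def]
    omega
  have hu : #{k | k ≤ i ∧ j ≤ u k} < #(Iic i) := by
    refine card_lt_card ((ssubset_iff_of_subset fun k hk => ?_).2 ⟨i, ?_, fun hi => ?_⟩)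
    · exact mem_Iic.2 (mem_filter.1 hk).2.1
    · simp
    · have : (u i : ℕ) + 1 ≤ u i := (mem_filter.1 hi).2.2
      omega
  exact (h i j).not_gt (hv ▸ hu)

theorem bruhatLE.exists_ge_apply_ge {v u : Perm (Fin n)} (h : bruhatLE v u) (i : Fin n) :
    ∃ l ≥ i, u i ≤ v l := by
  by_contra! hlt
  have hi : v.symm (u i) < i := by
    by_contra! hle
    simpa using hlt _ hle
  -- in row `i - 1` and column `u i`, every position counting for `v` lies in that row, but the
  -- position `i` counting for `u` does not
  let i' : Fin n := ⟨i - 1, by omega⟩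
  have hv : #{k | k ≤ i' ∧ u i ≤ v k} = #{k | u i ≤ v k} := by
    congr 1
    ext k
    simp only [mem_filter, mem_univ, true_and, and_iff_right_iff_imp]
    intro hk
    by_contra! hki
    change (i : ℕ) - 1 < k at hki
    exact (hlt k (by omega)).not_ge hk
  have hu : #{k | k ≤ i' ∧ u i ≤ u k} < #{k | u i ≤ u k} := by
    refine card_lt_card ((ssubset_iff_of_subset fun k hk => ?_).2 ⟨i, ?_, fun hi' => ?_⟩)
    · exact mem_filter.2 ⟨mem_univ k, (mem_filter.1 hk).2.2⟩
    · simp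
    · have : (i : ℕ) ≤ i - 1 := (mem_filter.1 hi').2.1
      omega
  rw [card_filter_le_apply] at hv hu
  exact (h i' (u i)).not_gt (hv ▸ hu)

theorem exists_bruhatLE_apply_eq_of_lt {v : Perm (Fin n)} {m i l : Fin n} (hmi : m < i)
    (hil : i ≤ l) (hvml : v m ≤ v l) : ∃ u, bruhatLE v u ∧ u i = v m := by
  rcases lt_or_gt_of_ne (v.injective.ne hmi.ne) with hvmi | hvim
  · exact ⟨v * swap m i, bruhatLE_mul_swap v hmi hvmi, by simp⟩
  -- first raise the value at `i` to `v l`, then swap it with the value `v m`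
  have hil' : i < l := hil.lt_of_ne fun hil => by subst hil; exact hvml.not_gt hvim
  have hvml' : v m < v l := hvml.lt_of_ne (v.injective.ne (hmi.trans hil').ne)
  set u := v * swap i l with hu
  have hum : u m = v m := by simp [hu, swap_apply_of_ne_of_ne hmi.ne (hmi.trans hil').ne]
  have hui : u i = v l := by simp [hu]
  refine ⟨u * swap m i, (bruhatLE_mul_swap v hil' (hvim.trans hvml')).trans ?_, by simp [hum]⟩
  exact bruhatLE_mul_swap u hmi (by rw [hum, hui]; exact hvml')

theorem exists_bruhatLE_apply_eq_of_gt {v : Perm (Fin n)} {k i m : Fin n} (hki : k ≤ i)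
    (him : i < m) (hvkm : v k ≤ v m) : ∃ u, bruhatLE v u ∧ u i = v m := by
  rcases lt_or_gt_of_ne (v.injective.ne him.ne) with hvim | hvmi
  · exact ⟨v * swap i m, bruhatLE_mul_swap v him hvim, by simp⟩
  -- first lower the value at `i` to `v k`, then swap it with the value `v m`
  have hki' : k < i := hki.lt_of_ne fun hki => by subst hki; exact hvkm.not_gt hvmi
  have hvkm' : v k < v m := hvkm.lt_of_ne (v.injective.ne (hki'.trans him).ne)
  set u := v * swap k i with hu
  have hum : u m = v m := by simp [hu, swap_apply_of_ne_of_ne (hki'.trans him).ne' him.ne']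
  have hui : u i = v k := by simp [hu]
  refine ⟨u * swap i m, (bruhatLE_mul_swap v hki' (hvkm'.trans hvmi)).trans ?_, by simp [hum]⟩
  exact bruhatLE_mul_swap u him (by rw [hum, hui]; exact hvkm')

theorem mem_grInt_revPerm_iff {v : Perm (Fin n)} {i j : Fin n} :
    (i, j) ∈ grInt v Fin.revPerm ↔ (∃ k ≤ i, v k ≤ j) ∧ ∃ l ≥ i, j ≤ v l := by
  constructor
  · rintro ⟨u, hvu, -, hui⟩
    obtain rfl : u i = j := hui
    exact ⟨hvu.exists_le_apply_le i, hvu.exists_ge_apply_ge i⟩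
  · rintro ⟨⟨k, hki, hvk⟩, l, hil, hvl⟩
    obtain ⟨m, rfl⟩ := v.surjective j
    obtain ⟨u, hvu, hui⟩ : ∃ u, bruhatLE v u ∧ u i = v m := by
      rcases lt_trichotomy m i with hmi | rfl | him
      · exact exists_bruhatLE_apply_eq_of_lt hmi hil hvl
      · exact ⟨v, bruhatLE_refl v, rfl⟩
      · exact exists_bruhatLE_apply_eq_of_gt hki him hvk
    exact ⟨u, hvu, bruhatLE_revPerm u, hui⟩

def HasWideNonInversion (v : Perm (Fin n)) : Prop :=
  ∃ k l : Fin n, (k : ℕ) + 2 ≤ l ∧ (v k : ℕ) + 2 ≤ v l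

theorem hasSquare_three_iff {v : Perm (Fin n)} :
    hasSquare (grInt v Fin.revPerm) 3 ↔ HasWideNonInversion v := by
  simp only [hasSquare, mem_grInt_revPerm_iff]
  constructor
  · rintro ⟨r, c, hr, hc, hsq⟩
    obtain ⟨⟨k, hkr, hvk⟩, -⟩ :=
      hsq ⟨r, by omega⟩ ⟨c, by omega⟩ le_rfl (by simp) le_rfl (by simp)
    obtain ⟨-, l, hrl, hvl⟩ :=
      hsq ⟨r + 2, by omega⟩ ⟨c + 2, by omega⟩ (by simp) (by simp) (by simp) (by simp)
    simp only [Fin.le_def] at hkr hvk hrl hvl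
    exact ⟨k, l, by omega, by omega⟩
  · rintro ⟨k, l, hkl, hvkl⟩
    exact ⟨k, v k, by omega, by omega, fun i j hki hil hkj hjl =>
      ⟨⟨k, by omega, by omega⟩, l, by omega, by omega⟩⟩

theorem hasWideNonInversion_of_lt {v : Perm (Fin n)} {a b c x : Fin n} (hab : a < b)
    (hbc : b < c) (hax : v a < x) (hxc : x < v c) : HasWideNonInversion v :=
  ⟨a, c, by omega, by omega⟩

theorem not_hasWideNonInversion {v : Perm (Fin n)} (h2143 : avoids2143 v) (h123 : avoids123 v)
    (h1432 : avoids1432 v) (h3214 : avoids3214 v) : ¬ HasWideNonInversion v := by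
  rintro ⟨k, l, hkl, hvkl⟩
  -- compare the pair with the next position `m` and with the position `q` of the next value
  let m : Fin n := ⟨k + 1, by omega⟩
  obtain ⟨q, hq⟩ := v.surjective ⟨v k + 1, by omega⟩
  have hkm : k < m := Nat.lt_succ_self k
  have hml : m < l := show (k : ℕ) + 1 < l by omega
  have hvq : (v q : ℕ) = v k + 1 := by rw [hq]
  have hvkq : v k < v q := by omega
  have hvql : v q < v l := by omega
  by_cases hkql : k < q ∧ q < l
  · exact h123 ⟨k, q, l, hkql.1, hkql.2, hvkq, hvql⟩
  have hq : q < k ∨ l < q := by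
    have := ne_of_apply_ne v hvkq.ne'
    have := ne_of_apply_ne v hvql.ne
    omega
  rcases lt_or_gt_of_ne (v.injective.ne hkm.ne') with hvmk | hvkm
  · rcases hq with hqk | hlq
    · exact h3214 ⟨q, k, m, l, hqk, hkm, hml, hvmk, hvkq, hvql⟩
    · exact h2143 ⟨k, m, l, q, hkm, hml, hlq, hvmk, hvkq, hvql⟩
  rcases lt_or_gt_of_ne (v.injective.ne hml.ne) with hvml | hvlm
  · exact h123 ⟨k, m, l, hkm, hml, hvkm, hvml⟩
  rcases hq with hqk | hlq
  · exact h2143 ⟨q, k, m, l, hqk, hkm, hml, hvkq, hvql, hvlm⟩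
  · exact h1432 ⟨k, m, l, q, hkm, hml, hlq, hvkq, hvql, hvlm⟩

end

/-- For `v` avoiding 2143: `Γ([v, w₀])` contains no `3 × 3` square region iff
`v` avoids 123, 1432, and 3214. -/
theorem no_three_square_iff_avoids {n : ℕ} (v : Equiv.Perm (Fin n))
    (h : avoids2143 v) :
    ¬ hasSquare (grInt v Fin.revPerm) 3 ↔
      avoids123 v ∧ avoids1432 v ∧ avoids3214 v := by
  rw [hasSquare_three_iff]
  refine ⟨fun hw => ⟨?_, ?_, ?_⟩, fun ⟨h123, h1432, h3214⟩ =>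
    not_hasWideNonInversion h h123 h1432 h3214⟩
  · rintro ⟨a, b, c, hab, hbc, hvab, hvbc⟩
    exact hw (hasWideNonInversion_of_lt hab hbc hvab hvbc)
  · rintro ⟨a, b, c, d, hab, hbc, -, hvad, hvdc, -⟩
    exact hw (hasWideNonInversion_of_lt hab hbc hvad hvdc)
  · rintro ⟨a, b, c, d, -, hbc, hcd, -, hvba, hvad⟩
    exact hw (hasWideNonInversion_of_lt hbc hcd hvba hvad)
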